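/- A càdlàg process X is a quasi-martingale (difference of two nonnegative supermartingales) if and only if there exists a minimal decomposition X = \bar X^1 - \bar X^2 (the Rao decomposition) such that for any decomposition X = X^1 - X^2 as a difference of two nonnegative supermartingales, X^1 \ge \bar X^1 and X^2 \ge \bar X^2. -/

import Mathlib

open MeasureTheory Set Filter

/-! Any two decompositions `X = X₁ - X₂ = Y₁ - Y₂` into nonnegative supermartingales give a third
one, `X = (X₁ ⊓ Y₁) - (X₂ ⊓ Y₂)`, and likewise for countable infima. Let `v t` be the infimum of
`E[X₁ t]` over all decompositions; it is antitone, hence continuous off a countable set `D`.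
Taking the infimum of countably many near-optimal decompositions yields a decomposition `B` with
`E[B₁ t] ≤ v t` for `t ∈ D ∪ ℚ`; for `t ∉ D` this persists, as `E[B₁ t] ≤ E[B₁ q] ≤ v q` for
rational `q < t` and `v` is continuous at `t`. If `Y` is any decomposition, `B ⊓ Y` is one too with
`v t ≤ E[(B ⊓ Y)₁ t] ≤ E[B₁ t] ≤ v t`, which forces `B₁ t ≤ Y₁ t` a.s., and then
`B₂ t = B₁ t - X t ≤ Y₂ t`. -/

theorem ciInf_sub_ciInf_of_sub_eq {κ : Type*} [Nonempty κ] {a b : κ → ℝ} {x : ℝ}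
    (hb : BddBelow (range b)) (h : ∀ k, a k - b k = x) : (⨅ k, a k) - ⨅ k, b k = x := by
  have ha : a = fun k => OrderIso.addRight x (b k) := funext fun k => by
    simp [← h k]
  rw [ha, ← (OrderIso.addRight x).map_ciInf hb, OrderIso.addRight_apply, add_sub_cancel_left]

namespace MeasureTheory

variable {Ω ι κ : Type*} {m : MeasurableSpace Ω} {P : Measure Ω}

section Preorder

variable [Preorder ι] {ℱ : Filtration ι m}

theorem Supermartingale.antitone_integral [IsFiniteMeasure P] {f : ι → Ω → ℝ}
    (hf : Supermartingale f ℱ P) : Antitone fun t => ∫ ω, f t ω ∂P := fun _ _ hst => by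
  simpa using hf.setIntegral_le hst MeasurableSet.univ

theorem Supermartingale.iInf [Countable κ] [Nonempty κ] {f : κ → ι → Ω → ℝ}
    (hf : ∀ k, Supermartingale (f k) ℱ P) (hf_nonneg : ∀ k t ω, 0 ≤ f k t ω) :
    Supermartingale (fun t ω => ⨅ k, f k t ω) ℱ P := by
  have hbdd : ∀ t ω, BddBelow (range fun k => f k t ω) := fun t ω =>
    ⟨0, forall_mem_range.2 fun k => hf_nonneg k t ω⟩
  have hle : ∀ k t ω, ⨅ k, f k t ω ≤ f k t ω := fun k t ω => ciInf_le (hbdd t ω) k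
  have hmeas : ∀ t, StronglyMeasurable[ℱ t] fun ω => ⨅ k, f k t ω := fun t =>
    (Measurable.iInf fun k => ((hf k).stronglyMeasurable t).measurable).stronglyMeasurable
  have hint : ∀ t, Integrable (fun ω => ⨅ k, f k t ω) P := by
    intro t
    obtain ⟨k⟩ := ‹Nonempty κ›
    refine ((hf k).integrable t).mono' ((hmeas t).mono (ℱ.le t)).aestronglyMeasurable
      (ae_of_all _ fun ω => ?_)
    rw [Real.norm_of_nonneg (le_ciInf fun k => hf_nonneg k t ω)]
    exact hle k t ω
  refine ⟨hmeas, fun s t hst => ?_, hint⟩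
  have hcond : ∀ k, P[fun ω => ⨅ k, f k t ω | ℱ s] ≤ᵐ[P] f k s := fun k =>
    (condExp_mono (hint t) ((hf k).integrable t) (ae_of_all _ (hle k t))).trans
      ((hf k).condExp_ae_le hst)
  filter_upwards [ae_all_iff.2 hcond] with ω hω
  exact le_ciInf hω

structure IsNonnegSupermartingaleDecomp (ℱ : Filtration ι m) (P : Measure Ω) (S : Set ι)
    (X X₁ X₂ : ι → Ω → ℝ) : Prop where
  supermartingale_fst : Supermartingale X₁ ℱ P
  supermartingale_snd : Supermartingale X₂ ℱ P
  nonneg_fst : ∀ t ω, 0 ≤ X₁ t ω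
  nonneg_snd : ∀ t ω, 0 ≤ X₂ t ω
  ae_eq_sub : ∀ t ∈ S, ∀ᵐ ω ∂P, X t ω = X₁ t ω - X₂ t ω

namespace IsNonnegSupermartingaleDecomp

variable {S : Set ι} {X : ι → Ω → ℝ}

theorem iInf [Countable κ] [Nonempty κ] {X₁ X₂ : κ → ι → Ω → ℝ}
    (h : ∀ k, IsNonnegSupermartingaleDecomp ℱ P S X (X₁ k) (X₂ k)) :
    IsNonnegSupermartingaleDecomp ℱ P S X (fun t ω => ⨅ k, X₁ k t ω)
      (fun t ω => ⨅ k, X₂ k t ω) where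
  supermartingale_fst :=
    Supermartingale.iInf (fun k => (h k).supermartingale_fst) fun k => (h k).nonneg_fst
  supermartingale_snd :=
    Supermartingale.iInf (fun k => (h k).supermartingale_snd) fun k => (h k).nonneg_snd
  nonneg_fst t ω := le_ciInf fun k => (h k).nonneg_fst t ω
  nonneg_snd t ω := le_ciInf fun k => (h k).nonneg_snd t ω
  ae_eq_sub t ht := by
    filter_upwards [ae_all_iff.2 fun k => (h k).ae_eq_sub t ht] with ω hω
    exact (ciInf_sub_ciInf_of_sub_eq ⟨0, forall_mem_range.2 fun k => (h k).nonneg_snd t ω⟩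
      fun k => (hω k).symm).symm

theorem iInf_fst_le {X₁ X₂ : κ → ι → Ω → ℝ}
    (h : ∀ k, IsNonnegSupermartingaleDecomp ℱ P S X (X₁ k) (X₂ k)) (k : κ) (t : ι) (ω : Ω) :
    ⨅ k, X₁ k t ω ≤ X₁ k t ω :=
  ciInf_le ⟨0, forall_mem_range.2 fun k => (h k).nonneg_fst t ω⟩ k

theorem integral_iInf_fst_le [Countable κ] [Nonempty κ] {X₁ X₂ : κ → ι → Ω → ℝ}
    (h : ∀ k, IsNonnegSupermartingaleDecomp ℱ P S X (X₁ k) (X₂ k)) (k : κ) (t : ι) :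
    ∫ ω, ⨅ k, X₁ k t ω ∂P ≤ ∫ ω, X₁ k t ω ∂P :=
  integral_mono ((iInf h).supermartingale_fst.integrable t)
    ((h k).supermartingale_fst.integrable t) (iInf_fst_le h k t)

end IsNonnegSupermartingaleDecomp

/-- The infimum of `E[X₁ t]` over all decompositions `(X₁, X₂)` of `X` (junk value `0` if there
is none). -/
noncomputable def decompValue (ℱ : Filtration ι m) (P : Measure Ω) (S : Set ι)
    (X : ι → Ω → ℝ) (t : ι) : ℝ :=
  sInf {r | ∃ X₁ X₂, IsNonnegSupermartingaleDecomp ℱ P S X X₁ X₂ ∧ ∫ ω, X₁ t ω ∂P = r}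

variable {S : Set ι} {X X₁ X₂ B₁ B₂ : ι → Ω → ℝ}

theorem decompValue_le (h : IsNonnegSupermartingaleDecomp ℱ P S X X₁ X₂) (t : ι) :
    decompValue ℱ P S X t ≤ ∫ ω, X₁ t ω ∂P :=
  csInf_le ⟨0, by rintro r ⟨Y₁, Y₂, hY, rfl⟩; exact integral_nonneg (hY.nonneg_fst t)⟩
    ⟨X₁, X₂, h, rfl⟩

theorem antitone_decompValue [IsFiniteMeasure P]
    (h : IsNonnegSupermartingaleDecomp ℱ P S X X₁ X₂) : Antitone (decompValue ℱ P S X) := by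
  intro s t hst
  refine le_csInf ⟨_, X₁, X₂, h, rfl⟩ ?_
  rintro r ⟨Y₁, Y₂, hY, rfl⟩
  exact (decompValue_le hY t).trans (hY.supermartingale_fst.antitone_integral hst)

theorem exists_integral_fst_lt_of_decompValue_lt
    (h : IsNonnegSupermartingaleDecomp ℱ P S X X₁ X₂) {t : ι} {c : ℝ}
    (hc : decompValue ℱ P S X t < c) :
    ∃ Y₁ Y₂, IsNonnegSupermartingaleDecomp ℱ P S X Y₁ Y₂ ∧ ∫ ω, Y₁ t ω ∂P < c := by
  obtain ⟨_, ⟨Y₁, Y₂, hY, rfl⟩, hlt⟩ := exists_lt_of_csInf_lt (by exact ⟨_, X₁, X₂, h, rfl⟩) hc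
  exact ⟨Y₁, Y₂, hY, hlt⟩

theorem exists_integral_fst_le_decompValue (h : IsNonnegSupermartingaleDecomp ℱ P S X X₁ X₂)
    (t : ι) : ∃ B₁ B₂, IsNonnegSupermartingaleDecomp ℱ P S X B₁ B₂ ∧
      ∫ ω, B₁ t ω ∂P ≤ decompValue ℱ P S X t := by
  choose Y₁ Y₂ hY hlt using fun n : ℕ => exists_integral_fst_lt_of_decompValue_lt h
    (lt_add_of_pos_right (decompValue ℱ P S X t) (Nat.one_div_pos_of_nat (n := n)))
  refine ⟨_, _, IsNonnegSupermartingaleDecomp.iInf hY, le_of_forall_pos_lt_add fun ε hε => ?_⟩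
  obtain ⟨n, hn⟩ := exists_nat_one_div_lt hε
  calc ∫ ω, ⨅ n, Y₁ n t ω ∂P ≤ ∫ ω, Y₁ n t ω ∂P := IsNonnegSupermartingaleDecomp.integral_iInf_fst_le hY n t
    _ < decompValue ℱ P S X t + 1 / (n + 1) := hlt n
    _ < decompValue ℱ P S X t + ε := by gcongr

theorem exists_integral_fst_le_decompValue_of_countable {D : Set ι} (hD : D.Countable)
    (hD_ne : D.Nonempty) (h : IsNonnegSupermartingaleDecomp ℱ P S X X₁ X₂) :
    ∃ B₁ B₂, IsNonnegSupermartingaleDecomp ℱ P S X B₁ B₂ ∧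
      ∀ t ∈ D, ∫ ω, B₁ t ω ∂P ≤ decompValue ℱ P S X t := by
  have := hD.to_subtype
  have := hD_ne.to_subtype
  choose Y₁ Y₂ hY hle using fun t : D => exists_integral_fst_le_decompValue h t
  exact ⟨_, _, IsNonnegSupermartingaleDecomp.iInf hY, fun t ht =>
    (IsNonnegSupermartingaleDecomp.integral_iInf_fst_le hY ⟨t, ht⟩ t).trans (hle ⟨t, ht⟩)⟩

theorem IsNonnegSupermartingaleDecomp.ae_le_of_integral_fst_le_decompValue
    (hB : IsNonnegSupermartingaleDecomp ℱ P S X B₁ B₂)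
    (hX : IsNonnegSupermartingaleDecomp ℱ P S X X₁ X₂) {t : ι} (ht : t ∈ S)
    (hBv : ∫ ω, B₁ t ω ∂P ≤ decompValue ℱ P S X t) :
    ∀ᵐ ω ∂P, B₁ t ω ≤ X₁ t ω ∧ B₂ t ω ≤ X₂ t ω := by
  have hW : ∀ b, IsNonnegSupermartingaleDecomp ℱ P S X (bif b then B₁ else X₁)
      (bif b then B₂ else X₂) := Bool.forall_bool.2 ⟨hX, hB⟩
  have hW_eq : (fun ω => ⨅ b, (bif b then B₁ else X₁) t ω) =ᵐ[P] B₁ t :=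
    (integral_eq_iff_of_ae_le ((iInf hW).supermartingale_fst.integrable t)
      (hB.supermartingale_fst.integrable t) (ae_of_all _ (iInf_fst_le hW true t))).1
      ((integral_iInf_fst_le hW true t).antisymm (hBv.trans (decompValue_le (iInf hW) t)))
  filter_upwards [hW_eq, hB.ae_eq_sub t ht, hX.ae_eq_sub t ht] with ω hω hBX hXX
  have h₁ : B₁ t ω ≤ X₁ t ω := hω ▸ iInf_fst_le hW false t ω
  exact ⟨h₁, by linarith⟩

end Preorder

variable {ℱ : Filtration ℝ m} {S : Set ℝ} {X X₁ X₂ : ℝ → Ω → ℝ}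

theorem exists_integral_fst_le_decompValue_forall [IsFiniteMeasure P]
    (h : IsNonnegSupermartingaleDecomp ℱ P S X X₁ X₂) :
    ∃ B₁ B₂, IsNonnegSupermartingaleDecomp ℱ P S X B₁ B₂ ∧
      ∀ t, ∫ ω, B₁ t ω ∂P ≤ decompValue ℱ P S X t := by
  set v := decompValue ℱ P S X
  have hv := antitone_decompValue h
  obtain ⟨B₁, B₂, hB, hBv⟩ := exists_integral_fst_le_decompValue_of_countable
    (hv.countable_not_continuousAt.union (countable_range ((↑) : ℚ → ℝ)))
    ⟨0, Or.inr ⟨0, Rat.cast_zero⟩⟩ h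
  refine ⟨B₁, B₂, hB, fun t => ?_⟩
  by_cases hcont : ContinuousAt v t
  · have hleft : ∀ s < t, ∫ ω, B₁ t ω ∂P ≤ v s := fun s hs => by
      obtain ⟨q, hsq, hqt⟩ := exists_rat_btwn hs
      calc ∫ ω, B₁ t ω ∂P ≤ ∫ ω, B₁ q ω ∂P := hB.supermartingale_fst.antitone_integral hqt.le
        _ ≤ v q := hBv q (Or.inr ⟨q, rfl⟩)
        _ ≤ v s := hv hsq.le
    exact ge_of_tendsto (x := nhdsWithin t (Iio t)) (hcont.tendsto.mono_left nhdsWithin_le_nhds)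
      (eventually_nhdsWithin_of_forall hleft)
  · exact hBv t (Or.inl hcont)

end MeasureTheory

theorem quasimartingale_iff_rao_decomposition_general
    {Ω : Type*} {m : MeasurableSpace Ω} (P : Measure Ω) [IsProbabilityMeasure P]
    (ℱ : Filtration ℝ m) (T : ℝ)
    (X : ℝ → Ω → ℝ) :
    (∃ X1 X2 : ℝ → Ω → ℝ,
        Supermartingale X1 ℱ P ∧ Supermartingale X2 ℱ P ∧
        (∀ t ω, 0 ≤ X1 t ω) ∧ (∀ t ω, 0 ≤ X2 t ω) ∧
        (∀ t ∈ Icc (0:ℝ) T, ∀ᵐ ω ∂P, X t ω = X1 t ω - X2 t ω))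
    ↔ (∃ B1 B2 : ℝ → Ω → ℝ,
        Supermartingale B1 ℱ P ∧ Supermartingale B2 ℱ P ∧
        (∀ t ω, 0 ≤ B1 t ω) ∧ (∀ t ω, 0 ≤ B2 t ω) ∧
        (∀ t ∈ Icc (0:ℝ) T, ∀ᵐ ω ∂P, X t ω = B1 t ω - B2 t ω) ∧
        (∀ X1 X2 : ℝ → Ω → ℝ,
          Supermartingale X1 ℱ P → Supermartingale X2 ℱ P →
          (∀ t ω, 0 ≤ X1 t ω) → (∀ t ω, 0 ≤ X2 t ω) →
          (∀ t ∈ Icc (0:ℝ) T, ∀ᵐ ω ∂P, X t ω = X1 t ω - X2 t ω) →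
          ∀ t ∈ Icc (0:ℝ) T, ∀ᵐ ω ∂P, B1 t ω ≤ X1 t ω ∧ B2 t ω ≤ X2 t ω)) := by
  refine ⟨fun ⟨X₁, X₂, h₁, h₂, h₁_nonneg, h₂_nonneg, h_eq⟩ => ?_,
    fun ⟨B₁, B₂, h₁, h₂, h₁_nonneg, h₂_nonneg, h_eq, _⟩ =>
      ⟨B₁, B₂, h₁, h₂, h₁_nonneg, h₂_nonneg, h_eq⟩⟩
  obtain ⟨B₁, B₂, hB, hBv⟩ :=
    exists_integral_fst_le_decompValue_forall ⟨h₁, h₂, h₁_nonneg, h₂_nonneg, h_eq⟩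
  exact ⟨B₁, B₂, hB.supermartingale_fst, hB.supermartingale_snd, hB.nonneg_fst, hB.nonneg_snd,
    hB.ae_eq_sub, fun Y₁ Y₂ h₁ h₂ h₁_nonneg h₂_nonneg h_eq t ht =>
      hB.ae_le_of_integral_fst_le_decompValue ⟨h₁, h₂, h₁_nonneg, h₂_nonneg, h_eq⟩ ht (hBv t)⟩

/-- A càdlàg adapted process `X` on `[0,T]` is a quasi-martingale (a difference of two
nonnegative supermartingales) if and only if it admits a minimal (Rao) decomposition
`X = B1 - B2` into nonnegative supermartingales, i.e. such that every decomposition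
`X = X1 - X2` into nonnegative supermartingales satisfies `X1 ≥ B1` and `X2 ≥ B2`. -/
theorem quasimartingale_iff_rao_decomposition
    {Ω : Type*} {m : MeasurableSpace Ω} (P : Measure Ω) [IsProbabilityMeasure P]
    (ℱ : Filtration ℝ m) (T : ℝ) (hT : 0 < T)
    (X : ℝ → Ω → ℝ) (hadapted : Adapted ℱ X)
    (hcadlag : ∀ ω, ∀ t ∈ Icc (0:ℝ) T,
      ContinuousWithinAt (fun s => X s ω) (Ici t) t ∧
      ∃ l : ℝ, Tendsto (fun s => X s ω) (nhdsWithin t (Iio t)) (nhds l)) :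
    (∃ X1 X2 : ℝ → Ω → ℝ,
        Supermartingale X1 ℱ P ∧ Supermartingale X2 ℱ P ∧
        (∀ t ω, 0 ≤ X1 t ω) ∧ (∀ t ω, 0 ≤ X2 t ω) ∧
        (∀ t ∈ Icc (0:ℝ) T, ∀ᵐ ω ∂P, X t ω = X1 t ω - X2 t ω))
    ↔ (∃ B1 B2 : ℝ → Ω → ℝ,
        Supermartingale B1 ℱ P ∧ Supermartingale B2 ℱ P ∧
        (∀ t ω, 0 ≤ B1 t ω) ∧ (∀ t ω, 0 ≤ B2 t ω) ∧
        (∀ t ∈ Icc (0:ℝ) T, ∀ᵐ ω ∂P, X t ω = B1 t ω - B2 t ω) ∧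
        (∀ X1 X2 : ℝ → Ω → ℝ,
          Supermartingale X1 ℱ P → Supermartingale X2 ℱ P →
          (∀ t ω, 0 ≤ X1 t ω) → (∀ t ω, 0 ≤ X2 t ω) →
          (∀ t ∈ Icc (0:ℝ) T, ∀ᵐ ω ∂P, X t ω = X1 t ω - X2 t ω) →
          ∀ t ∈ Icc (0:ℝ) T, ∀ᵐ ω ∂P, B1 t ω ≤ X1 t ω ∧ B2 t ω ≤ X2 t ω)) :=
  quasimartingale_iff_rao_decomposition_general P ℱ T X
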